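/- Let q be an even integer with 0 < q < m. Then for every t ∈ V_m, ξ⁻_q(t)·(ξ⁺_1(t) − ξ⁺_1(−q)) = (q+1)·ξ⁺_{q+1}(t) in R, where ξ⁺_1(−q) ∈ R is the value of ξ⁺_1 at the vertex −q. -/

import Mathlib

/-!
Write `q = 2p`. On each branch a class is a binomial coefficient times a product of consecutive
linear forms, and since `q` is even every ceiling occurring at a vertex `t` is an integer shift of
one ceiling `c`. For `t > q` the difference `ξ⁺_1(t) − ξ⁺_1(−q)` factors as `(c+q)(−α+(c−1)δ)`,
for `t ≤ −q` as `(c−1)(α+(c+q)δ)`; in both cases the linear form is exactly the factor by which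
the product in `ξ⁺_{q+1}(t)` exceeds that of `ξ⁻_q(t)`, and the scalars match by
`(n+1)·C(n,q) = (q+1)·C(n+1,q+1)`, resp. `(n−q)·C(n,q) = (q+1)·C(n,q+1)`. For `−q−2 < t ≤ q`
both sides vanish: `ξ⁺_{q+1}(t) = 0`, and either `ξ⁻_q(t) = 0` or `c = 1`.
-/

noncomputable section

open Finset MvPolynomial

/-- The coefficient ring `R = ℚ[α,δ]`, realized as polynomials in two variables. -/
abbrev Rpoly : Type := MvPolynomial (Fin 2) ℚ

/-- The variable `α`. -/
def va : Rpoly := X 0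

/-- The variable `δ`. -/
def vd : Rpoly := X 1

/-- `P⁻(a,b) = ∏_{k=a}^{b} (−α + k·δ)`. -/
def Pneg (a b : ℤ) : Rpoly :=
  ∏ k ∈ Finset.Icc a b, (-va + MvPolynomial.C (k : ℚ) * vd)

/-- `P⁺(a,b) = ∏_{k=a}^{b} (α + k·δ)`. -/
def Ppos (a b : ℤ) : Rpoly :=
  ∏ k ∈ Finset.Icc a b, (va + MvPolynomial.C (k : ℚ) * vd)

/-- Binomial coefficient `C(n,q)` (all uses have `n ≥ 0`). -/
def B (n : ℤ) (q : ℕ) : ℚ := (n.toNat).choose q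

/-- The Knutson–Tao class `ξ⁺_q = ξ(m+q, m−q)`, as a function on vertices `t`
(the vertex `t` encodes the pair `(m+t, m−t)`). -/
def xiP (m : ℤ) (q : ℕ) (t : ℤ) : Rpoly :=
  if (q : ℤ) ≤ t ∧ t ≤ m then
    MvPolynomial.C (B (⌈((t : ℚ) - (q : ℚ) + 1) / 2⌉ + q - 1) q) *
      Pneg (⌈((t : ℚ) - (q : ℚ) + 1) / 2⌉ - 1) (⌈((t : ℚ) - (q : ℚ) + 1) / 2⌉ + q - 2)
  else if -m ≤ t ∧ t ≤ -((q : ℤ) + 1) then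
    MvPolynomial.C (B (⌈(-(t : ℚ) - (q : ℚ)) / 2⌉ + q - 1) q) *
      Ppos (⌈(-(t : ℚ) - (q : ℚ)) / 2⌉ + 1) (⌈(-(t : ℚ) - (q : ℚ)) / 2⌉ + q)
  else 0

/-- The Knutson–Tao class `ξ⁻_q = ξ(m−q, m+q)`. -/
def xiM (m : ℤ) (q : ℕ) (t : ℤ) : Rpoly :=
  if (q : ℤ) + 1 ≤ t ∧ t ≤ m then
    MvPolynomial.C (B (⌈((t : ℚ) - (q : ℚ)) / 2⌉ + q - 1) q) *
      Pneg (⌈((t : ℚ) - (q : ℚ)) / 2⌉) (⌈((t : ℚ) - (q : ℚ)) / 2⌉ + q - 1)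
  else if -m ≤ t ∧ t ≤ -(q : ℤ) then
    MvPolynomial.C (B (⌈(-(t : ℚ) - (q : ℚ) + 1) / 2⌉ + q - 1) q) *
      Ppos (⌈(-(t : ℚ) - (q : ℚ) + 1) / 2⌉) (⌈(-(t : ℚ) - (q : ℚ) + 1) / 2⌉ + q - 1)
  else 0

/-- The weight of the vertex `t`: `w(t) = ((1−2t)/2)·α + (t(t−1)/2)·δ`. -/
def w (t : ℤ) : Rpoly :=
  MvPolynomial.C ((1 - 2 * (t : ℚ)) / 2) * va +
    MvPolynomial.C (((t : ℚ) * ((t : ℚ) - 1)) / 2) * vd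

lemma ceil_add_two_mul_div_two (x : ℚ) (k : ℤ) : ⌈(x + 2 * k) / 2⌉ = ⌈x / 2⌉ + k := by
  rw [add_div, mul_div_cancel_left₀ _ two_ne_zero, Int.ceil_add_intCast]

lemma Pneg_self (a : ℤ) : Pneg a a = -va + a * vd := by
  simp [Pneg]

lemma Ppos_self (a : ℤ) : Ppos a a = va + a * vd := by
  simp [Ppos]

lemma Pneg_eq_mul_Pneg_add_one {a b : ℤ} (h : a ≤ b) :
    Pneg a b = (-va + a * vd) * Pneg (a + 1) b := by
  rw [Pneg, Pneg, ← Finset.insert_Icc_add_one_left_eq_Icc h, prod_insert (by simp), map_intCast]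

lemma Ppos_eq_Ppos_sub_one_mul {a b : ℤ} (h : a ≤ b) :
    Ppos a b = Ppos a (b - 1) * (va + b * vd) := by
  rw [Ppos, Ppos, ← Finset.insert_Icc_sub_one_right_eq_Icc h, prod_insert (by simp), map_intCast,
    mul_comm]

lemma B_one {n : ℤ} (hn : 0 ≤ n) : B n 1 = n := by
  lift n to ℕ using hn
  simp [B]

lemma add_one_mul_B {n : ℤ} (hn : 0 ≤ n) (q : ℕ) :
    ((n : ℚ) + 1) * B n q = (q + 1) * B (n + 1) (q + 1) := by
  lift n to ℕ using hn
  simp only [B, ← Nat.cast_add_one, Int.cast_natCast, Int.toNat_natCast]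
  exact_mod_cast (Nat.add_one_mul_choose_eq n q).trans (mul_comm _ _)

lemma sub_mul_B {n : ℤ} {q : ℕ} (h : (q : ℤ) ≤ n) :
    ((n : ℚ) - q) * B n q = (q + 1) * B n (q + 1) := by
  lift n to ℕ using (Int.natCast_nonneg q).trans h
  have hqn : q ≤ n := by exact_mod_cast h
  simp only [B, Int.toNat_natCast, Int.cast_natCast]
  rw [← Nat.cast_sub hqn]
  have key := Nat.choose_succ_right_eq n q
  rw [mul_comm, mul_comm (n.choose q)] at key
  exact_mod_cast key.symm

section Unfold

variable {m t c : ℤ} {q : ℕ}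

lemma xiM_of_pos (h1 : q + 1 ≤ t) (h2 : t ≤ m) (hc : ⌈((t : ℚ) - q) / 2⌉ = c) :
    xiM m q t = C (B (c + q - 1) q) * Pneg c (c + q - 1) := by
  rw [xiM, if_pos ⟨h1, h2⟩, hc]

lemma xiM_of_neg (h1 : -m ≤ t) (h2 : t ≤ -q) (hc : ⌈(-(t : ℚ) - q + 1) / 2⌉ = c) :
    xiM m q t = C (B (c + q - 1) q) * Ppos c (c + q - 1) := by
  rw [xiM, if_neg (by omega), if_pos ⟨h1, h2⟩, hc]

lemma xiM_eq_zero (h1 : -q < t) (h2 : t ≤ q) : xiM m q t = 0 := by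
  rw [xiM, if_neg (by omega), if_neg (by omega)]

lemma xiP_of_pos (h1 : q ≤ t) (h2 : t ≤ m) (hc : ⌈((t : ℚ) - q + 1) / 2⌉ = c) :
    xiP m q t = C (B (c + q - 1) q) * Pneg (c - 1) (c + q - 2) := by
  rw [xiP, if_pos ⟨h1, h2⟩, hc]

lemma xiP_of_neg (h1 : -m ≤ t) (h2 : t ≤ -(q + 1)) (hc : ⌈(-(t : ℚ) - q) / 2⌉ = c) :
    xiP m q t = C (B (c + q - 1) q) * Ppos (c + 1) (c + q) := by
  rw [xiP, if_neg (by omega), if_pos ⟨h1, h2⟩, hc]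

lemma xiP_eq_zero (h1 : -(q + 1) < t) (h2 : t < q) : xiP m q t = 0 := by
  rw [xiP, if_neg (by omega), if_neg (by omega)]

lemma xiP_one_of_pos (h1 : 1 ≤ t) (h2 : t ≤ m) (hc : ⌈(t : ℚ) / 2⌉ = c) :
    xiP m 1 t = c * (-va + (c - 1 : ℤ) * vd) := by
  have hc0 : 0 < c := hc ▸ Int.ceil_pos.mpr (by positivity)
  rw [xiP_of_pos (by simpa using h1) h2 (by simpa using hc), Nat.cast_one, add_sub_cancel_right,
    show c + 1 - 2 = c - 1 by ring, B_one hc0.le, Pneg_self, map_intCast]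

lemma xiP_one_of_neg (h1 : -m ≤ t) (h2 : t ≤ -2) (hc : ⌈(-(t : ℚ) - 1) / 2⌉ = c) :
    xiP m 1 t = c * (va + (c + 1 : ℤ) * vd) := by
  have hc0 : 0 < c := hc ▸ Int.ceil_pos.mpr (by
    have : (t : ℚ) ≤ -2 := by exact_mod_cast h2
    linarith)
  rw [xiP_of_neg h1 (by simpa using h2) (by simpa using hc)]
  simp only [Nat.cast_one, add_sub_cancel_right, B_one hc0.le, Ppos_self, map_intCast]

end Unfold

section Difference

variable {m t c : ℤ} {p : ℕ}

lemma xiP_one_neg_two_mul (hp : 1 ≤ p) (hpm : 2 * p ≤ m) :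
    xiP m 1 (-(2 * p : ℕ)) = p * (va + (p + 1 : ℤ) * vd) := by
  have hc : ⌈(-((-(2 * p : ℕ) : ℤ) : ℚ) - 1) / 2⌉ = p := by
    rw [show (-((-(2 * p : ℕ) : ℤ) : ℚ) - 1) = -1 + 2 * ((p : ℤ) : ℚ) by push_cast; ring,
      ceil_add_two_mul_div_two, show ⌈(-1 : ℚ) / 2⌉ = 0 by norm_num [Int.ceil_eq_iff], zero_add]
  rw [xiP_one_of_neg (by omega) (by omega) hc, Int.cast_natCast]

lemma xiP_one_sub_xiP_one_neg_two_mul_of_pos (hp : 1 ≤ p) (hpm : 2 * p ≤ m) (h1 : 1 ≤ t)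
    (h2 : t ≤ m) (hc : ⌈((t : ℚ) - (2 * p : ℕ)) / 2⌉ = c) :
    xiP m 1 t - xiP m 1 (-(2 * p : ℕ)) = (c + 2 * p : ℤ) * (-va + (c - 1 : ℤ) * vd) := by
  have hcp : ⌈(t : ℚ) / 2⌉ = c + p := by
    rw [← hc, ← ceil_add_two_mul_div_two]
    push_cast
    ring_nf
  rw [xiP_one_of_pos h1 h2 hcp, xiP_one_neg_two_mul hp hpm]
  push_cast
  ring

lemma xiP_one_sub_xiP_one_neg_two_mul_of_neg (hp : 1 ≤ p) (hpm : 2 * p ≤ m) (h1 : -m ≤ t)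
    (h2 : t ≤ -2) (hc : ⌈(-(t : ℚ) - (2 * p : ℕ) + 1) / 2⌉ = c) :
    xiP m 1 t - xiP m 1 (-(2 * p : ℕ)) = (c - 1 : ℤ) * (va + (c + 2 * p : ℤ) * vd) := by
  have hcp : ⌈(-(t : ℚ) - 1) / 2⌉ = c + (p - 1 : ℤ) := by
    rw [← hc, ← ceil_add_two_mul_div_two]
    push_cast
    ring_nf
  rw [xiP_one_of_neg h1 h2 hcp, xiP_one_neg_two_mul hp hpm]
  push_cast
  ring

end Difference

section Regions

variable {m t : ℤ} {p : ℕ}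

lemma xiM_mul_sub_eq_of_pos (hp : 1 ≤ p) (h1 : 2 * p + 1 ≤ t) (h2 : t ≤ m) :
    xiM m (2 * p) t * (xiP m 1 t - xiP m 1 (-(2 * p : ℕ))) =
      ((2 * p + 1 : ℕ) : Rpoly) * xiP m (2 * p + 1) t := by
  set c := ⌈((t : ℚ) - (2 * p : ℕ)) / 2⌉ with hc
  have hc1 : 1 ≤ c := Int.ceil_pos.mpr (by
    have : ((2 * p : ℕ) : ℚ) + 1 ≤ t := by exact_mod_cast h1
    linarith)
  rw [xiM_of_pos (by push_cast; omega) h2 hc.symm,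
    xiP_one_sub_xiP_one_neg_two_mul_of_pos hp (by omega) (by omega) h2 hc.symm,
    xiP_of_pos (c := c) (by push_cast; omega) h2 (by rw [hc]; push_cast; ring_nf),
    show c + ((2 * p + 1 : ℕ) : ℤ) - 2 = c + (2 * p : ℕ) - 1 by push_cast; ring,
    Pneg_eq_mul_Pneg_add_one (a := c - 1) (by omega), sub_add_cancel,
    show c + ((2 * p + 1 : ℕ) : ℤ) - 1 = c + (2 * p : ℕ) - 1 + 1 by push_cast; ring]
  have key := congrArg (C : ℚ → Rpoly) (add_one_mul_B (n := c + (2 * p : ℕ) - 1) (by omega) (2 * p))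
  simp only [map_mul, map_add, map_one, map_intCast, map_natCast] at key
  push_cast at key ⊢
  linear_combination (Pneg c (c + 2 * p - 1) * (-va + (c - 1 : Rpoly) * vd)) * key

lemma xiM_mul_sub_eq_of_neg (hp : 1 ≤ p) (h1 : -m ≤ t) (h2 : t ≤ -(2 * p) - 2) :
    xiM m (2 * p) t * (xiP m 1 t - xiP m 1 (-(2 * p : ℕ))) =
      ((2 * p + 1 : ℕ) : Rpoly) * xiP m (2 * p + 1) t := by
  set c := ⌈(-(t : ℚ) - (2 * p : ℕ) + 1) / 2⌉ with hc
  have hc1 : 1 ≤ c := Int.ceil_pos.mpr (by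
    have : (t : ℚ) ≤ -(2 * p : ℕ) - 2 := by exact_mod_cast h2
    linarith)
  rw [xiM_of_neg h1 (by push_cast; omega) hc.symm,
    xiP_one_sub_xiP_one_neg_two_mul_of_neg hp (by omega) h1 (by omega) hc.symm,
    xiP_of_neg (c := c - 1) h1 (by push_cast; omega)
      (by rw [hc, eq_sub_iff_add_eq, ← ceil_add_two_mul_div_two]; push_cast; ring_nf),
    sub_add_cancel, show c - 1 + ((2 * p + 1 : ℕ) : ℤ) = c + (2 * p : ℕ) by push_cast; ring,
    Ppos_eq_Ppos_sub_one_mul (a := c) (b := c + (2 * p : ℕ)) (by omega)]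
  have key :=
    congrArg (C : ℚ → Rpoly) (sub_mul_B (n := c + (2 * p : ℕ) - 1) (q := 2 * p) (by omega))
  simp only [map_mul, map_add, map_sub, map_one, map_intCast, map_natCast] at key
  push_cast at key ⊢
  linear_combination (Ppos c (c + 2 * p - 1) * (va + (c + 2 * p : Rpoly) * vd)) * key

lemma xiM_mul_sub_eq_of_mid (hp : 1 ≤ p) (h1 : -m ≤ t) (h2 : -(2 * p) - 2 < t)
    (h3 : t < 2 * p + 1) :
    xiM m (2 * p) t * (xiP m 1 t - xiP m 1 (-(2 * p : ℕ))) =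
      ((2 * p + 1 : ℕ) : Rpoly) * xiP m (2 * p + 1) t := by
  rw [xiP_eq_zero (q := 2 * p + 1) (by push_cast; omega) (by push_cast; omega), mul_zero]
  rcases lt_or_ge (-(2 * p : ℤ)) t with h | h
  · rw [xiM_eq_zero (by push_cast; omega) (by push_cast; omega), zero_mul]
  · have hc : ⌈(-(t : ℚ) - (2 * p : ℕ) + 1) / 2⌉ = 1 := by
      have hlo : (-(2 * p : ℤ) - 1 : ℚ) ≤ t := by exact_mod_cast (by omega : -(2 * p : ℤ) - 1 ≤ t)
      have hhi : (t : ℚ) ≤ -(2 * p : ℤ) := by exact_mod_cast h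
      push_cast at hlo hhi ⊢
      rw [Int.ceil_eq_iff]
      constructor <;> norm_num <;> linarith
    rw [xiP_one_sub_xiP_one_neg_two_mul_of_neg hp (by omega) h1 (by omega) hc, sub_self,
      Int.cast_zero, zero_mul, mul_zero]

end Regions

theorem statement7_general (m : ℕ) (q : ℕ) (heven : Even q)
    (hq0 : 0 < q)
    (t : ℤ) (ht1 : -(m : ℤ) ≤ t) (ht2 : t ≤ (m : ℤ)) :
    xiM m q t * (xiP m 1 t - xiP m 1 (-(q : ℤ))) = ((q + 1 : ℕ) : Rpoly) * xiP m (q + 1) t := by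
  obtain ⟨p, rfl⟩ := even_iff_two_dvd.mp heven
  have hp : 1 ≤ p := by omega
  rcases le_or_gt (2 * p + 1 : ℤ) t with hpos | hlt
  · exact xiM_mul_sub_eq_of_pos hp hpos ht2
  rcases le_or_gt t (-(2 * p) - 2 : ℤ) with hneg | hgt
  · exact xiM_mul_sub_eq_of_neg hp ht1 hneg
  · exact xiM_mul_sub_eq_of_mid hp ht1 hgt hlt

/-- for even `0 < q < m`,
`ξ⁻_q · (ξ⁺_1 − ξ⁺_1(−q)) = (q+1) · ξ⁺_{q+1}` pointwise on `V_m`. -/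
theorem statement7 (m : ℕ) (hm : 1 ≤ m) (q : ℕ) (heven : Even q)
    (hq0 : 0 < q) (hqm : q < m)
    (t : ℤ) (ht1 : -(m : ℤ) ≤ t) (ht2 : t ≤ (m : ℤ)) :
    xiM m q t * (xiP m 1 t - xiP m 1 (-(q : ℤ))) = ((q + 1 : ℕ) : Rpoly) * xiP m (q + 1) t :=
  statement7_general m q heven hq0 t ht1 ht2
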